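/- Every finite graph G (with at least one vertex) satisfies (2α(G) − 1)·η(G) ≥ |V(G)|. -/

import Mathlib

open SimpleGraph

/-- A set of vertices is independent: no two of its vertices are adjacent. -/
def IsIndepSet {V : Type*} (G : SimpleGraph V) (s : Set V) : Prop :=
  s.Pairwise fun a b => ¬ G.Adj a b

/-- The independence number of a graph. -/
noncomputable def indepNum {V : Type*} [Fintype V] (G : SimpleGraph V) : ℕ :=
  sSup {n | ∃ s : Finset V, _root_.IsIndepSet G ↑s ∧ s.card = n}

/-- A set of vertices is connected if it induces a connected subgraph. -/
def IsConnSet {V : Type*} (G : SimpleGraph V) (s : Set V) : Prop :=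
  (G.induce s).Connected

/-- A set of vertices is dominating if every vertex outside it has a neighbour in it. -/
def IsDomSet {V : Type*} (G : SimpleGraph V) (s : Set V) : Prop :=
  ∀ v ∉ s, ∃ u ∈ s, G.Adj u v

/-- `G` has a `K_n`-minor, witnessed by `n` pairwise disjoint nonempty connected
branch sets with an edge between each pair. -/
def HasCliqueMinor {V : Type*} (G : SimpleGraph V) (n : ℕ) : Prop :=
  ∃ B : Fin n → Set V,
    (∀ i, (B i).Nonempty) ∧
    (∀ i, IsConnSet G (B i)) ∧
    (Pairwise fun i j => Disjoint (B i) (B j)) ∧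
    (Pairwise fun i j => ∃ u ∈ B i, ∃ v ∈ B j, G.Adj u v)

/-- The Hadwiger number: the largest `n` such that `K_n` is a minor of `G`. -/
noncomputable def hadwigerNum {V : Type*} [Fintype V] (G : SimpleGraph V) : ℕ :=
  sSup {n | HasCliqueMinor G n}

/-!
Induction on a vertex set `s`: some `K_n` minor with branch sets inside `s` has
`|s| ≤ (2α(s) - 1) n`. If `G[s]` is disconnected, split off a union `C` of components: independent
sets of `C` and `s \ C` combine, so their independence numbers add up, and the larger of the two
minors serves for `s`. If `G[s]` is connected, it has a connected dominating set `D` containing an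
independent set `I` with `|D| < 2|I|`: a largest such `D` dominates, since an edge `xy` of `G[s]`
leaving the closed neighbourhood of `D` lets us add `x, y` to `D` and `y` to `I`. Being dominating,
`D` touches every branch set of the minor found in `s \ D`, so it becomes one more branch set.
-/

open Finset

section

variable {V : Type*} {G : SimpleGraph V}

lemma IsConnSet.exists_adj_boundary {s T : Set V} (hs : IsConnSet G s) {a b : V}
    (ha : a ∈ s) (haT : a ∈ T) (hb : b ∈ s) (hbT : b ∉ T) :
    ∃ x ∈ s, ∃ y ∈ s, x ∈ T ∧ y ∉ T ∧ G.Adj x y := by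
  obtain ⟨p⟩ := hs.preconnected ⟨a, ha⟩ ⟨b, hb⟩
  obtain ⟨d, -, hx, hy⟩ := p.exists_boundary_dart (Subtype.val ⁻¹' T) haT hbT
  exact ⟨d.fst, d.fst.2, d.snd, d.snd.2, hx, hy, d.adj⟩

lemma isConnSet_singleton (v : V) : IsConnSet G {v} := by
  rw [IsConnSet, induce_singleton_eq_top]
  exact connected_top

lemma IsConnSet.insert_of_adj {s : Set V} (hs : IsConnSet G s) {u x : V} (hu : u ∈ s)
    (hux : G.Adj u x) : IsConnSet G (insert x s) := by
  rw [Set.insert_eq, Set.union_comm]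
  exact connected_induce_union hs.preconnected (isConnSet_singleton x).preconnected hu rfl hux

lemma IsIndepSet.insert_of_not_adj {s : Set V} (hs : _root_.IsIndepSet G s) {y : V}
    (hy : ∀ u ∈ s, ¬ G.Adj u y) : _root_.IsIndepSet G (insert y s) :=
  Set.pairwise_insert.2 ⟨hs, fun u hu _ => ⟨fun hyu => hy u hu hyu.symm, hy u hu⟩⟩

lemma IsIndepSet.union {s t : Set V} (hs : _root_.IsIndepSet G s) (ht : _root_.IsIndepSet G t)
    (hst : ∀ a ∈ s, ∀ b ∈ t, ¬ G.Adj a b) : _root_.IsIndepSet G (s ∪ t) :=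
  Set.pairwise_union.2 ⟨hs, ht, fun a ha b hb _ => ⟨hst a ha b hb, fun h => hst a ha b hb h.symm⟩⟩

open Classical in
noncomputable def indepNumOn (G : SimpleGraph V) (s : Finset V) : ℕ :=
  (s.powerset.filter fun t : Finset V => _root_.IsIndepSet G ↑t).sup card

lemma card_le_indepNumOn {s t : Finset V} (hts : t ⊆ s) (ht : _root_.IsIndepSet G t) :
    #t ≤ indepNumOn G s := by
  classical
  exact le_sup (mem_filter.2 ⟨mem_powerset.2 hts, ht⟩)

lemma exists_isIndepSet_card_eq_indepNumOn (s : Finset V) :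
    ∃ t ⊆ s, _root_.IsIndepSet G t ∧ #t = indepNumOn G s := by
  classical
  have hempty : ∅ ∈ s.powerset.filter fun t : Finset V => _root_.IsIndepSet G ↑t :=
    mem_filter.2 ⟨empty_mem_powerset s, by simp [_root_.IsIndepSet]⟩
  obtain ⟨t, ht, hmax⟩ := exists_mem_eq_sup _ ⟨∅, hempty⟩ card
  obtain ⟨hts, ht⟩ := mem_filter.1 ht
  exact ⟨t, mem_powerset.1 hts, ht, by rw [indepNumOn, hmax]⟩

lemma indepNumOn_mono {s s' : Finset V} (h : s ⊆ s') : indepNumOn G s ≤ indepNumOn G s' := by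
  obtain ⟨t, hts, ht, hcard⟩ := exists_isIndepSet_card_eq_indepNumOn (G := G) s
  exact hcard ▸ card_le_indepNumOn (hts.trans h) ht

lemma one_le_indepNumOn {s : Finset V} (hs : s.Nonempty) : 1 ≤ indepNumOn G s := by
  obtain ⟨v, hv⟩ := hs
  simpa using card_le_indepNumOn (G := G) (singleton_subset_iff.2 hv) (by simp [_root_.IsIndepSet])

lemma Fin.pairwise_cons {α : Type*} {r : α → α → Prop} (hr : ∀ x y, r x y → r y x) {n : ℕ}
    {a : α} {f : Fin n → α} (ha : ∀ i, r a (f i)) (hf : Pairwise fun i j => r (f i) (f j)) :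
    Pairwise fun i j =>
      r ((Fin.cons a f : Fin (n + 1) → α) i) ((Fin.cons a f : Fin (n + 1) → α) j) := by
  intro i j hij
  cases i using Fin.cases <;> cases j using Fin.cases
  · exact absurd rfl hij
  · exact ha _
  · exact hr _ _ (ha _)
  · exact hf fun h => hij (congrArg Fin.succ h)

structure IsCliqueMinorModel (G : SimpleGraph V) {n : ℕ} (B : Fin n → Set V) : Prop where
  nonempty : ∀ i, (B i).Nonempty
  isConnSet : ∀ i, IsConnSet G (B i)
  disjoint : Pairwise fun i j => Disjoint (B i) (B j)
  adj : Pairwise fun i j => ∃ u ∈ B i, ∃ v ∈ B j, G.Adj u v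

lemma IsCliqueMinorModel.cons {n : ℕ} {B : Fin n → Set V} (hB : IsCliqueMinorModel G B)
    {D : Set V} (hD : D.Nonempty) (hDc : IsConnSet G D) (hdisj : ∀ i, Disjoint D (B i))
    (hadj : ∀ i, ∃ u ∈ D, ∃ v ∈ B i, G.Adj u v) :
    IsCliqueMinorModel G (Fin.cons D B : Fin (n + 1) → Set V) where
  nonempty := Fin.cases hD hB.nonempty
  isConnSet := Fin.cases hDc hB.isConnSet
  disjoint := Fin.pairwise_cons (fun _ _ h => h.symm) hdisj hB.disjoint
  adj := Fin.pairwise_cons (r := fun X Y => ∃ u ∈ X, ∃ v ∈ Y, G.Adj u v)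
    (fun _ _ ⟨u, hu, v, hv, huv⟩ => ⟨v, hv, u, hu, huv.symm⟩) hadj hB.adj

def HasCliqueMinorIn (G : SimpleGraph V) (s : Finset V) (n : ℕ) : Prop :=
  ∃ B : Fin n → Set V, IsCliqueMinorModel G B ∧ ∀ i, B i ⊆ s

lemma hasCliqueMinorIn_zero (s : Finset V) : HasCliqueMinorIn G s 0 :=
  ⟨Fin.elim0, ⟨fun i => i.elim0, fun i => i.elim0, fun i => i.elim0, fun i => i.elim0⟩,
    fun i => i.elim0⟩

lemma HasCliqueMinorIn.mono {s t : Finset V} {n : ℕ} (h : HasCliqueMinorIn G s n) (hst : s ⊆ t) :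
    HasCliqueMinorIn G t n :=
  let ⟨B, hB, hBs⟩ := h
  ⟨B, hB, fun i => (hBs i).trans (coe_subset.2 hst)⟩

lemma HasCliqueMinorIn.hasCliqueMinor {s : Finset V} {n : ℕ} (h : HasCliqueMinorIn G s n) :
    HasCliqueMinor G n :=
  let ⟨_, hB, _⟩ := h
  ⟨_, hB.nonempty, hB.isConnSet, hB.disjoint, hB.adj⟩

section DecidableEq

variable [DecidableEq V]

theorem IsConnSet.exists_connected_dominating {s : Finset V} (hs : IsConnSet G s)
    (hne : s.Nonempty) :
    ∃ D ⊆ s, IsConnSet G D ∧ (∀ w ∈ s, w ∉ D → ∃ u ∈ D, G.Adj u w) ∧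
      ∃ I ⊆ D, _root_.IsIndepSet G I ∧ #D < 2 * #I := by
  classical
  let P (D : Finset V) : Prop := IsConnSet G D ∧ ∃ I ⊆ D, _root_.IsIndepSet G I ∧ #D < 2 * #I
  obtain ⟨v, hv⟩ := hne
  have hvP : {v} ∈ s.powerset.filter P := by
    refine mem_filter.2 ⟨by simpa using hv, ?_, {v}, subset_rfl, ?_, by simp⟩
    · simpa using isConnSet_singleton v
    · simp [_root_.IsIndepSet]
  obtain ⟨D, hD, hmax⟩ := exists_max_image (s.powerset.filter P) card ⟨_, hvP⟩
  obtain ⟨hDs, hDc, I, hID, hI, hcard⟩ := (mem_filter.1 hD).imp_left mem_powerset.1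
  refine ⟨D, hDs, hDc, ?_, I, hID, hI, hcard⟩
  by_contra! ⟨w, hws, hwD, hwN⟩
  obtain ⟨d, hd⟩ : D.Nonempty := card_pos.1 (by linarith [card_le_card hID])
  obtain ⟨x, hxs, y, hys, hxN, hyN, hxy⟩ :=
    hs.exists_adj_boundary (T := {z | z ∈ D ∨ ∃ u ∈ D, G.Adj u z}) (hDs hd) (Or.inl hd) hws
      (by simpa [hwD] using hwN)
  simp only [Set.mem_ofPred_eq, not_or, not_exists, not_and] at hxN hyN
  obtain ⟨hyD, hyN⟩ := hyN
  have hxD : x ∉ D := fun h => hyN x h hxy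
  obtain ⟨u, hu, hux⟩ := hxN.resolve_left hxD
  have hyI : y ∉ I := fun h => hyD (hID h)
  have hcard' : #(insert y (insert x D)) = #D + 2 := by
    rw [card_insert_of_notMem (by simp [hxy.ne.symm, hyD]), card_insert_of_notMem hxD]
  have hgrow : insert y (insert x D) ∈ s.powerset.filter P := by
    refine mem_filter.2 ⟨?_, ?_, insert y I, insert_subset_insert _ (hID.trans (subset_insert _ _)),
      ?_, ?_⟩
    · simpa [insert_subset_iff, hDs] using ⟨hys, hxs⟩
    · simpa using (hDc.insert_of_adj hu hux).insert_of_adj (Set.mem_insert x _) hxy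
    · simpa using hI.insert_of_not_adj fun u hu => hyN u (hID (mem_coe.1 hu))
    · rw [hcard', card_insert_of_notMem hyI]
      omega
  have := hmax _ hgrow
  omega

lemma indepNumOn_add_le_union {C R : Finset V} (hCR : Disjoint C R)
    (hsep : ∀ a ∈ C, ∀ b ∈ R, ¬ G.Adj a b) :
    indepNumOn G C + indepNumOn G R ≤ indepNumOn G (C ∪ R) := by
  obtain ⟨t₁, ht₁C, ht₁, hcard₁⟩ := exists_isIndepSet_card_eq_indepNumOn (G := G) C
  obtain ⟨t₂, ht₂R, ht₂, hcard₂⟩ := exists_isIndepSet_card_eq_indepNumOn (G := G) R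
  have hindep : _root_.IsIndepSet G ↑(t₁ ∪ t₂) := by
    rw [coe_union]
    exact ht₁.union ht₂ fun a ha b hb => hsep a (ht₁C ha) b (ht₂R hb)
  rw [← hcard₁, ← hcard₂, ← card_union_of_disjoint (hCR.mono ht₁C ht₂R)]
  exact card_le_indepNumOn (union_subset_union ht₁C ht₂R) hindep

lemma exists_separated_of_not_isConnSet {s : Finset V} (hne : s.Nonempty)
    (hs : ¬ IsConnSet G s) : ∃ C ⊂ s, C.Nonempty ∧ ∀ a ∈ C, ∀ b ∈ s \ C, ¬ G.Adj a b := by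
  classical
  obtain ⟨v, hv⟩ := hne
  let C := s.filter fun w => ∃ hw : w ∈ s, (G.induce s).Reachable ⟨v, hv⟩ ⟨w, hw⟩
  have hclosed : ∀ a ∈ C, ∀ b ∈ s, G.Adj a b → b ∈ C := by
    intro a ha b hb hab
    obtain ⟨-, ha, hva⟩ := mem_filter.1 ha
    exact mem_filter.2 ⟨hb, hb, hva.trans (Adj.reachable (by simpa using hab))⟩
  refine ⟨C, (filter_subset _ _).ssubset_of_ne fun hCs => hs ?_, ⟨v, mem_filter.2 ⟨hv, hv, .rfl⟩⟩,
    fun a ha b hb hab => (mem_sdiff.1 hb).2 (hclosed a ha b (mem_sdiff.1 hb).1 hab)⟩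
  have hreach (w : (s : Set V)) : (G.induce s).Reachable ⟨v, hv⟩ w :=
    (mem_filter.1 (hCs.ge w.2)).2.2
  exact { preconnected a b := (hreach a).symm.trans (hreach b), nonempty := ⟨⟨v, hv⟩⟩ }

lemma HasCliqueMinorIn.succ_of_dominating {s D : Finset V} {n : ℕ}
    (h : HasCliqueMinorIn G (s \ D) n) (hDs : D ⊆ s) (hD : D.Nonempty) (hDc : IsConnSet G D)
    (hdom : ∀ w ∈ s, w ∉ D → ∃ u ∈ D, G.Adj u w) : HasCliqueMinorIn G s (n + 1) := by
  obtain ⟨B, hB, hBs⟩ := h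
  refine ⟨Fin.cons (D : Set V) B, hB.cons hD hDc (fun i => ?_) (fun i => ?_), Fin.cases hDs ?_⟩
  · exact Set.disjoint_of_subset_right (hBs i) (by rw [coe_sdiff]; exact Set.disjoint_sdiff_right)
  · obtain ⟨w, hw⟩ := hB.nonempty i
    obtain ⟨hws, hwD⟩ := mem_sdiff.1 (hBs i hw)
    obtain ⟨u, hu, huw⟩ := hdom w hws hwD
    exact ⟨u, hu, w, hw, huw⟩
  · exact fun i => (hBs i).trans (coe_subset.2 sdiff_subset)

lemma card_le_of_dominating {s D I : Finset V} {n : ℕ} (hDs : D ⊆ s) (hID : I ⊆ D)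
    (hI : _root_.IsIndepSet G I) (hcard : #D < 2 * #I)
    (hR : #(s \ D) ≤ (2 * indepNumOn G (s \ D) - 1) * n) :
    #s ≤ (2 * indepNumOn G s - 1) * (n + 1) := by
  have hIs : #I ≤ indepNumOn G s := card_le_indepNumOn (hID.trans hDs) hI
  have hRs : indepNumOn G (s \ D) ≤ indepNumOn G s := indepNumOn_mono sdiff_subset
  calc #s = #(s \ D) + #D := (card_sdiff_add_card_eq_card hDs).symm
    _ ≤ (2 * indepNumOn G s - 1) * n + (2 * indepNumOn G s - 1) := by
      gcongr
      · exact hR.trans (Nat.mul_le_mul_right n (by omega))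
      · omega
    _ = (2 * indepNumOn G s - 1) * (n + 1) := by ring

lemma card_le_of_separated {s C : Finset V} {n₁ n₂ : ℕ} (hCs : C ⊆ s) (hC : C.Nonempty)
    (hR : (s \ C).Nonempty) (hsep : ∀ a ∈ C, ∀ b ∈ s \ C, ¬ G.Adj a b)
    (h₁ : #C ≤ (2 * indepNumOn G C - 1) * n₁)
    (h₂ : #(s \ C) ≤ (2 * indepNumOn G (s \ C) - 1) * n₂) :
    #s ≤ (2 * indepNumOn G s - 1) * max n₁ n₂ := by
  have hα := indepNumOn_add_le_union disjoint_sdiff hsep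
  rw [union_sdiff_of_subset hCs] at hα
  have hC1 := one_le_indepNumOn (G := G) hC
  have hR1 := one_le_indepNumOn (G := G) hR
  calc #s = #C + #(s \ C) := by rw [add_comm, card_sdiff_add_card_eq_card hCs]
    _ ≤ (2 * indepNumOn G C - 1) * max n₁ n₂ + (2 * indepNumOn G (s \ C) - 1) * max n₁ n₂ := by
      gcongr
      · exact h₁.trans (Nat.mul_le_mul_left _ (le_max_left _ _))
      · exact h₂.trans (Nat.mul_le_mul_left _ (le_max_right _ _))
    _ ≤ (2 * indepNumOn G s - 1) * max n₁ n₂ := by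
      rw [← add_mul]
      exact Nat.mul_le_mul_right _ (by omega)

-- At `s = ∅` the truncated `2 * 0 - 1 = 0` is harmless: both sides vanish.
theorem exists_hasCliqueMinorIn_card_le (s : Finset V) :
    ∃ n, HasCliqueMinorIn G s n ∧ #s ≤ (2 * indepNumOn G s - 1) * n := by
  induction s using Finset.strongInduction with
  | H s ih =>
  rcases s.eq_empty_or_nonempty with rfl | hne
  · exact ⟨0, hasCliqueMinorIn_zero ∅, by simp⟩
  by_cases hs : IsConnSet G s
  · obtain ⟨D, hDs, hDc, hdom, I, hID, hI, hcard⟩ := hs.exists_connected_dominating hne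
    have hD : D.Nonempty := card_pos.1 (by linarith [card_le_card hID])
    obtain ⟨n, hminor, hR⟩ := ih (s \ D) (sdiff_ssubset hDs hD)
    exact ⟨n + 1, hminor.succ_of_dominating hDs hD hDc hdom,
      card_le_of_dominating hDs hID hI hcard hR⟩
  · obtain ⟨C, hCs, hC, hsep⟩ := exists_separated_of_not_isConnSet hne hs
    have hR : (s \ C).Nonempty := sdiff_nonempty.2 hCs.not_subset
    obtain ⟨n₁, hminor₁, h₁⟩ := ih C hCs
    obtain ⟨n₂, hminor₂, h₂⟩ := ih (s \ C) (sdiff_ssubset hCs.subset hC)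
    refine ⟨max n₁ n₂, ?_, card_le_of_separated hCs.subset hC hR hsep h₁ h₂⟩
    rcases le_total n₁ n₂ with h | h
    · rw [max_eq_right h]; exact hminor₂.mono sdiff_subset
    · rw [max_eq_left h]; exact hminor₁.mono hCs.subset

end DecidableEq

section Fintype

variable [Fintype V]

lemma HasCliqueMinor.le_card {n : ℕ} (h : HasCliqueMinor G n) : n ≤ Fintype.card V := by
  obtain ⟨B, hne, -, hdisj, -⟩ := h
  choose f hf using hne
  simpa using Fintype.card_le_of_injective f fun i j hij =>
    by_contra fun h => Set.disjoint_left.1 (hdisj h) (hf i) (hij ▸ hf j)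

lemma HasCliqueMinor.le_hadwigerNum {n : ℕ} (h : HasCliqueMinor G n) : n ≤ hadwigerNum G :=
  le_csSup ⟨_, fun _ => HasCliqueMinor.le_card⟩ h

lemma indepNumOn_univ : indepNumOn G univ = _root_.indepNum G := by
  apply le_antisymm
  · obtain ⟨t, -, ht, hcard⟩ := exists_isIndepSet_card_eq_indepNumOn (G := G) univ
    exact le_csSup ⟨Fintype.card V, fun _ ⟨t, _, h⟩ => h ▸ card_le_univ t⟩ ⟨t, ht, hcard⟩
  · exact csSup_le ⟨0, ∅, by simp [_root_.IsIndepSet], rfl⟩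
      fun _ ⟨t, ht, h⟩ => h ▸ card_le_indepNumOn (subset_univ t) ht

end Fintype

end

theorem stmt_10 {V : Type*} [Fintype V] [Nonempty V] (G : SimpleGraph V) :
    (Fintype.card V : ℤ) ≤ (2 * _root_.indepNum G - 1) * hadwigerNum G := by
  classical
  obtain ⟨n, hminor, hcard⟩ := exists_hasCliqueMinorIn_card_le (G := G) univ
  have hα : 1 ≤ _root_.indepNum G := indepNumOn_univ (G := G) ▸ one_le_indepNumOn univ_nonempty
  rw [indepNumOn_univ, card_univ] at hcard
  have hcast : ((2 * _root_.indepNum G - 1 : ℕ) : ℤ) = 2 * _root_.indepNum G - 1 := by omega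
  calc (Fintype.card V : ℤ) ≤ ((2 * _root_.indepNum G - 1 : ℕ) : ℤ) * n := by
        exact_mod_cast hcard
    _ ≤ (2 * _root_.indepNum G - 1) * hadwigerNum G := by
      rw [hcast]
      gcongr
      · omega
      · exact_mod_cast hminor.hasCliqueMinor.le_hadwigerNum
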